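/- arXiv:1708.08864 — 7 statements merged into one kernel-verified Lean document; each statement's English description precedes it below -/
import Mathlib

section
/- Every admissible path in a simple graph is an induced path; that is, if π: i = i_0, i_1, …, i_r = j (with i < j) is an admissible path in a simple graph G on vertex set {1,…,n}, then for all indices k, ℓ with |k − ℓ| ≥ 2, the pair {i_k, i_ℓ} is not an edge of G. -/
/-!
If `l[k]` and `l[ℓ]` were adjacent with `k + 2 ≤ ℓ`, cutting out the vertices strictly between
them would leave a path from `i` to `j` whose interior is a proper sublist of the interior of `l`,
which admissibility forbids.
-/

/-- A list of vertices forms a path in `G`: consecutive vertices are adjacent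
and all vertices are distinct. -/
def IsPathList {V : Type*} (G : SimpleGraph V) (l : List V) : Prop :=
  l.Chain' G.Adj ∧ l.Nodup

/-- A list of vertices is an *admissible path* in a graph `G` on `{1,…,n}`
(modeled as `Fin n`): it is a path from `i` to `j` with `i < j`, every
interior vertex is `< i` or `> j`, and no proper (ordered) subset of the
interior vertices together with `i` and `j` forms a path in `G`. -/
def IsAdmissible {n : ℕ} (G : SimpleGraph (Fin n)) (l : List (Fin n)) : Prop :=
  ∃ i j : Fin n, i < j ∧ l.head? = some i ∧ l.getLast? = some j ∧
    IsPathList G l ∧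
    (∀ v ∈ l.tail.dropLast, v < i ∨ j < v) ∧
    (∀ l' : List (Fin n), l'.Sublist l.tail.dropLast → l' ≠ l.tail.dropLast →
      ¬ IsPathList G (i :: (l' ++ [j])))

namespace List

variable {α : Type*}

theorem eq_cons_tail_dropLast_append {l : List α} {i j : α} (hlen : 2 ≤ l.length)
    (hhead : l.head? = some i) (hlast : l.getLast? = some j) :
    l = i :: (l.tail.dropLast ++ [j]) := by
  obtain _ | ⟨a, t⟩ := l
  · simp at hhead
  obtain rfl : a = i := by simpa using hhead
  have ht : t ≠ [] := by rintro rfl; simp at hlen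
  rw [getLast?_cons, getLast?_eq_some_getLast ht] at hlast
  simp only [Option.getD_some, Option.some_inj] at hlast
  simp only [tail_cons, ← hlast, dropLast_append_getLast]

theorem take_append_drop_sublist_of_le (l : List α) {a b : ℕ} (hab : a ≤ b) :
    (l.take a ++ l.drop b).Sublist l := by
  conv_rhs => rw [← take_append_drop a l]
  exact (Sublist.refl _).append (drop_sublist_drop_left l hab)

theorem head?_take_succ_append_drop (l : List α) (a b : ℕ) :
    (l.take (a + 1) ++ l.drop b).head? = l.head? := by
  cases l <;> simp

theorem getLast?_take_append_drop {l : List α} (a : ℕ) {b : ℕ} (hb : b < l.length) :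
    (l.take a ++ l.drop b).getLast? = l.getLast? := by
  rw [getLast?_append, getLast?_drop, if_neg (by omega),
    getLast?_eq_some_getLast (ne_nil_of_length_pos (by omega)), Option.some_or]

end List

theorem IsPathList.take_succ_append_drop {V : Type*} {G : SimpleGraph V} {l : List V}
    (hl : IsPathList G l) {k ℓ : ℕ} (hkℓ : k < ℓ) (hℓ : ℓ < l.length)
    (hadj : G.Adj l[k] l[ℓ]) : IsPathList G (l.take (k + 1) ++ l.drop ℓ) := by
  refine ⟨hl.1.take _ |>.append (hl.1.drop _) ?_,
    (l.take_append_drop_sublist_of_le hkℓ).nodup hl.2⟩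
  intro x hx y hy
  rw [List.getLast?_take, if_neg (by omega), List.getElem?_eq_getElem (by omega)] at hx
  rw [List.head?_drop, List.getElem?_eq_getElem hℓ] at hy
  simp only [Option.some_or, Option.mem_def, Option.some_inj] at hx hy
  exact hx ▸ hy ▸ hadj

theorem IsAdmissible.not_adj_of_add_two_le {n : ℕ} {G : SimpleGraph (Fin n)} {l : List (Fin n)}
    (hl : IsAdmissible G l) {k ℓ : ℕ} (hkℓ : k + 2 ≤ ℓ) (hℓ : ℓ < l.length) :
    ¬ G.Adj l[k] l[ℓ] := by
  obtain ⟨i, j, -, hhead, hlast, hpath, -, hmin⟩ := hl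
  intro hadj
  set s := l.take (k + 1) ++ l.drop ℓ
  have hs_len : 2 ≤ s.length ∧ s.length < l.length := by
    simp only [s, List.length_append, List.length_take, List.length_drop]; omega
  have hl_eq := List.eq_cons_tail_dropLast_append (by omega) hhead hlast
  have hs_eq : s = i :: (s.tail.dropLast ++ [j]) :=
    List.eq_cons_tail_dropLast_append hs_len.1
      (l.head?_take_succ_append_drop k ℓ ▸ hhead) (List.getLast?_take_append_drop _ hℓ ▸ hlast)
  have hsub : s.tail.dropLast.Sublist l.tail.dropLast := by
    have : s.Sublist l := l.take_append_drop_sublist_of_le (by omega)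
    rwa [hl_eq, hs_eq, List.cons_sublist_cons, List.append_sublist_append_right] at this
  have hne : s.tail.dropLast ≠ l.tail.dropLast := by
    intro h
    have := hs_len.2
    rw [hs_eq, h, ← hl_eq] at this
    omega
  exact hmin _ hsub hne (hs_eq ▸ hpath.take_succ_append_drop (by omega) hℓ hadj)

/-- Every admissible path is an induced path: vertices at positions at
distance at least 2 in the path are non-adjacent in `G`. -/
theorem admissible_path_is_induced {n : ℕ} (G : SimpleGraph (Fin n))
    (l : List (Fin n)) (hl : IsAdmissible G l)
    (k ℓ : ℕ) (hk : k < l.length) (hℓ : ℓ < l.length)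
    (hkl : k + 2 ≤ ℓ ∨ ℓ + 2 ≤ k) :
    ¬ G.Adj (l.get ⟨k, hk⟩) (l.get ⟨ℓ, hℓ⟩) := by
  rcases hkl with h | h
  · exact hl.not_adj_of_add_two_le h hℓ
  · exact fun hadj => hl.not_adj_of_add_two_le h hk hadj.symm
end

section
/- Let T be a tree on the vertex set {1,…,n} such that the graph distance d(i, i+1) ≤ 2 for every i with 1 ≤ i < n. Then every admissible path in T has at most 3 vertices. -/
/-!
Suppose an admissible path from `i` to `j` had at least four vertices. Its second and third
vertices `b`, `c` are interior, hence outside `[i, j]`, and `s(b, c)` is an edge of the path.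
In a tree the path from `i` to `j` is unique, so deleting `s(b, c)` separates `i` from `j`.
But for every `k ∈ [i, j)` the walk of length `≤ 2` from `k` to `k + 1` has at most one vertex
besides its endpoints, so it cannot use `s(b, c)`; chaining these walks reconnects `i` and `j`.
-/

namespace SimpleGraph

variable {V : Type*} {G : SimpleGraph V}

lemma Walk.exists_support_eq_of_isChain {l : List V} (hl : l.IsChain G.Adj) {u v : V}
    (hu : l.head? = some u) (hv : l.getLast? = some v) : ∃ p : G.Walk u v, p.support = l := by
  have hne : l ≠ [] := by rintro rfl; simp at hu
  refine ⟨(Walk.ofSupport l hne hl).copy ((List.head_eq_iff_head?_eq_some hne).mpr hu)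
    ((List.getLast_eq_iff_getLast?_eq_some hne).mpr hv), ?_⟩
  rw [Walk.support_copy, Walk.support_ofSupport]

lemma Walk.mem_or_mem_of_mem_edges_of_length_le_two {u v : V} {e : Sym2 V} (p : G.Walk u v)
    (hp : p.length ≤ 2) (he : e ∈ p.edges) : u ∈ e ∨ v ∈ e := by
  rcases p with _ | ⟨_, _ | ⟨_, _ | ⟨_, _⟩⟩⟩ <;> simp at hp he
  · simp [he]
  · rcases he with rfl | rfl <;> simp

lemma reachable_deleteEdges_of_dist_le_two {u v : V} {e : Sym2 V} (huv : G.Reachable u v)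
    (hd : G.dist u v ≤ 2) (hu : u ∉ e) (hv : v ∉ e) : (G.deleteEdges {e}).Reachable u v := by
  cases e with
  | h x y =>
    obtain ⟨p, hp⟩ := huv.exists_walk_length_eq_dist
    exact reachable_deleteEdges_iff_exists_walk.mpr
      ⟨p, fun he => (p.mem_or_mem_of_mem_edges_of_length_le_two (hp ▸ hd) he).elim hu hv⟩

lemma IsAcyclic.not_reachable_deleteEdges_of_mem_edges (hG : G.IsAcyclic) {u v : V}
    {p : G.Walk u v} (hp : p.IsPath) {e : Sym2 V} (he : e ∈ p.edges) :
    ¬ (G.deleteEdges {e}).Reachable u v := by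
  classical
  cases e with
  | h x y =>
    rintro hr
    obtain ⟨q, hq⟩ := reachable_deleteEdges_iff_exists_walk.mp hr
    have hpq : (⟨p, hp⟩ : G.Path u v) = ⟨q.bypass, q.bypass_isPath⟩ :=
      (hG.subsingleton_path u v).elim _ _
    exact hq (q.edges_bypass_subset_edges (congrArg (fun r : G.Path u v => r.1.edges) hpq ▸ he))

lemma reachable_of_forall_reachable_succ {n : ℕ} {G : SimpleGraph (Fin n)} {i j : Fin n}
    (hij : i ≤ j)
    (h : ∀ k k' : Fin n, i ≤ k → k' ≤ j → (k' : ℕ) = k + 1 → G.Reachable k k') :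
    G.Reachable i j := by
  suffices ∀ m, (i : ℕ) ≤ m → ∀ hm : m < n, m ≤ j → G.Reachable i ⟨m, hm⟩ from
    this j hij j.2 le_rfl
  intro m him
  induction m, him using Nat.le_induction with
  | base => exact fun _ _ => .rfl
  | succ m him ih =>
    intro hm hmj
    exact (ih (by omega) (by omega)).trans (h _ _ him (Fin.le_def.mpr hmj) rfl)

end SimpleGraph

open SimpleGraph

lemma IsAdmissible.exists_isPath_mem_edges_outside {n : ℕ} {G : SimpleGraph (Fin n)}
    {l : List (Fin n)} (hl : IsAdmissible G l) (hlen : 3 < l.length) :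
    ∃ i j : Fin n, i < j ∧ ∃ p : G.Walk i j, p.IsPath ∧
      ∃ b c : Fin n, s(b, c) ∈ p.edges ∧ (b < i ∨ j < b) ∧ (c < i ∨ j < c) := by
  obtain ⟨i, j, hij, hhead, hlast, ⟨hchain, hnodup⟩, hint, -⟩ := hl
  obtain ⟨p, hp⟩ := Walk.exists_support_eq_of_isChain hchain hhead hlast
  obtain ⟨a, b, c, d, rest, rfl⟩ : ∃ a b c d rest, l = a :: b :: c :: d :: rest := by
    rcases l with _ | ⟨a, _ | ⟨b, _ | ⟨c, _ | ⟨d, rest⟩⟩⟩⟩ <;> simp at hlen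
    exact ⟨a, b, c, d, rest, rfl⟩
  refine ⟨i, j, hij, p, by rwa [Walk.isPath_def, hp], b, c, ?_, hint b (by simp),
    hint c (by simp)⟩
  rw [Walk.edges_eq_zipWith_support, hp]
  simp

/-- If `T` is a tree on `{1,…,n}` with `d(i, i+1) ≤ 2` for all `1 ≤ i < n`,
then every admissible path in `T` has at most 3 vertices. -/
theorem tree_dist_le_two_admissible_le_three {n : ℕ} (T : SimpleGraph (Fin n))
    (hT : T.IsTree)
    (hd : ∀ i j : Fin n, (j : ℕ) = (i : ℕ) + 1 → T.dist i j ≤ 2) :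
    ∀ l : List (Fin n), IsAdmissible T l → l.length ≤ 3 := by
  intro l hl
  by_contra! hlen
  obtain ⟨i, j, hij, p, hp, b, c, hbc, hb, hc⟩ := hl.exists_isPath_mem_edges_outside hlen
  refine hT.isAcyclic.not_reachable_deleteEdges_of_mem_edges hp hbc
    (reachable_of_forall_reachable_succ hij.le fun k k' hik hk'j hkk' => ?_)
  refine reachable_deleteEdges_of_dist_le_two (hT.connected k k') (hd k k' hkk') ?_ ?_ <;>
    simp only [Sym2.mem_iff, not_or] <;> omega
end

section
/- Let C_n be the cycle on n ≥ 4 vertices and set m = n/2 + 1 if n is even and m = (n+1)/2 + 1 if n is odd. Then for every bijective labeling of the vertices of C_n by {1,…,n}, there exists an admissible path with at least m vertices. -/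
/-!
For every `n` the bound is `m = ⌈n/2⌉ + 1`. If two consecutive labels `k, k + 1` are not
adjacent, every other label lies outside `[k, k + 1]`, so both arcs of the cycle between them
are admissible (a path between two vertices of a cycle is one of its two arcs, so there is no
shortcut), and the longer arc has at least `⌈n/2⌉` edges. Otherwise the labels run around the
cycle in order, and the arc from `0` through `n - 1, n - 2, …` down to `n - ⌈n/2⌉` is admissible.
-/

open SimpleGraph
open Fin.NatCast Fin.CommRing

section

variable {n : ℕ} [NeZero n] {σ τ : Fin n}

lemma natCast_sub_eq_neg {k : ℕ} (hk : k ≤ n) : ((n - k : ℕ) : Fin n) = -(k : Fin n) := by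
  rw [Nat.cast_sub hk, Fin.natCast_self, zero_sub]

lemma mul_self_eq_one_of_sign (hσ : σ = 1 ∨ σ = -1) : σ * σ = 1 := by
  rcases hσ with rfl | rfl <;> ring

lemma sign_eq_or_eq_neg (hσ : σ = 1 ∨ σ = -1) (hτ : τ = 1 ∨ τ = -1) : τ = σ ∨ τ = -σ := by
  rcases hσ with rfl | rfl <;> rcases hτ with rfl | rfl <;> simp

lemma eq_of_add_sign_mul_eq (hσ : σ = 1 ∨ σ = -1) {s : Fin n} {k l : ℕ} (hk : k < n) (hl : l < n)
    (h : s + σ * k = s + σ * l) : k = l := by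
  have hkl : (k : Fin n) = l := by
    simpa [← mul_assoc, mul_self_eq_one_of_sign hσ] using congrArg (σ * ·) (add_left_cancel h)
  simpa [Fin.val_cast_of_lt hk, Fin.val_cast_of_lt hl] using congrArg Fin.val hkl

lemma exists_sign_half_le_val {x : Fin n} (hx : x ≠ 0) :
    ∃ σ : Fin n, (σ = 1 ∨ σ = -1) ∧ (n + 1) / 2 ≤ (σ * x).val := by
  have hsum : x.val + (-x).val = n := by rw [Fin.val_neg, if_neg hx]; omega
  by_cases h : (n + 1) / 2 ≤ x.val
  · exact ⟨1, Or.inl rfl, by simpa using h⟩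
  · exact ⟨-1, Or.inr rfl, by simp only [neg_mul, one_mul]; omega⟩

lemma exists_sign_of_cycleGraph_adj {u v : Fin n} (h : (cycleGraph n).Adj u v) :
    ∃ σ : Fin n, (σ = 1 ∨ σ = -1) ∧ v = u + σ := by
  have hone : ∀ x : Fin n, x.val = 1 → x = 1 := fun x hx =>
    Fin.ext (by rw [hx, Fin.val_one', Nat.mod_eq_of_lt (by omega)])
  rcases cycleGraph_adj'.mp h with h | h
  · exact ⟨-1, Or.inr rfl, by rw [← hone _ h]; ring⟩
  · exact ⟨1, Or.inl rfl, by rw [← hone _ h]; ring⟩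

lemma cycleGraph_adj_add_sign (hn : 2 ≤ n) (hσ : σ = 1 ∨ σ = -1) (u : Fin n) :
    (cycleGraph n).Adj u (u + σ) := by
  have hone : (1 : Fin n).val = 1 := by rw [Fin.val_one', Nat.mod_eq_of_lt (by omega)]
  rw [cycleGraph_adj']
  rcases hσ with rfl | rfl
  · right; simpa using hone
  · left; simpa using hone

/-- The walk of `d` steps along the cycle from `s` in the direction `σ = ±1`. -/
def cycleArc (s σ : Fin n) (d : ℕ) : List (Fin n) :=
  (List.range (d + 1)).map fun k : ℕ => s + σ * (k : Fin n)

lemma length_cycleArc (s σ : Fin n) (d : ℕ) : (cycleArc s σ d).length = d + 1 := by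
  simp [cycleArc]

lemma cycleArc_zero (s σ : Fin n) : cycleArc s σ 0 = [s] := by
  simp [cycleArc]

lemma cycleArc_succ (s σ : Fin n) (d : ℕ) :
    cycleArc s σ (d + 1) = s :: cycleArc (s + σ) σ d := by
  rw [cycleArc, List.range_succ_eq_map, List.map_cons, List.map_map, cycleArc]
  congr 1
  · simp
  · refine List.map_congr_left fun k _ => ?_
    simp only [Function.comp_apply, Nat.succ_eq_add_one]
    push_cast
    ring

lemma cycleArc_eq_cons_append {d : ℕ} (hd : 0 < d) (s σ : Fin n) :
    cycleArc s σ d =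
      s :: ((List.range' 1 (d - 1)).map (fun k : ℕ => s + σ * k) ++ [s + σ * d]) := by
  obtain ⟨d, rfl⟩ := Nat.exists_eq_succ_of_ne_zero hd.ne'
  rw [cycleArc, List.range_succ, List.range_succ_eq_map]
  simp [List.range'_eq_map_range, Function.comp_def, Nat.add_comm]

theorem eq_cycleArc_of_isPathList :
    ∀ {s : Fin n} {t : List (Fin n)}, IsPathList (cycleGraph n) (s :: t) →
      ∃ σ : Fin n, (σ = 1 ∨ σ = -1) ∧ s :: t = cycleArc s σ t.length
  | s, [], _ => ⟨1, Or.inl rfl, (cycleArc_zero s 1).symm⟩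
  | s, b :: t, h => by
    obtain ⟨σ, hσ, rfl⟩ := exists_sign_of_cycleGraph_adj (List.isChain_cons_cons.mp h.1).1
    obtain ⟨τ, hτ, hrest⟩ := eq_cycleArc_of_isPathList
      ⟨(List.isChain_cons_cons.mp h.1).2, h.2.of_cons⟩
    refine ⟨σ, hσ, ?_⟩
    rw [List.length_cons, cycleArc_succ]
    rcases t with _ | ⟨c, t⟩
    · rw [List.length_nil, cycleArc_zero]
    rcases sign_eq_or_eq_neg hσ hτ with rfl | rfl
    · rw [hrest]
    · have hc : c = s := by
        rw [List.length_cons, cycleArc_succ, List.cons.injEq] at hrest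
        simpa [cycleArc, List.range_succ_eq_map] using congrArg List.head? hrest.2
      exact absurd (hc ▸ List.mem_cons_of_mem _ List.mem_cons_self) (List.nodup_cons.mp h.2).1

lemma isPathList_cycleArc (hn : 2 ≤ n) (hσ : σ = 1 ∨ σ = -1) (s : Fin n) {d : ℕ}
    (hd : d < n) : IsPathList (cycleGraph n) (cycleArc s σ d) := by
  constructor
  · rw [List.Chain', cycleArc, List.isChain_map, List.isChain_range_succ]
    intro k _
    convert cycleGraph_adj_add_sign hn hσ (s + σ * k) using 1
    push_cast
    ring
  · refine List.nodup_range.map_on fun k hk l hl h => ?_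
    rw [List.mem_range] at hk hl
    exact eq_of_add_sign_mul_eq hσ (by omega) (by omega) h

theorem eq_of_sublist_of_isPathList_cycleGraph {s : Fin n} (hσ : σ = 1 ∨ σ = -1) {d : ℕ}
    (hd : 0 < d) (hdn : d ≤ n - 2) {l : List (Fin n)}
    (hsub : l.Sublist ((List.range' 1 (d - 1)).map fun k : ℕ => s + σ * k))
    (hpath : IsPathList (cycleGraph n) (s :: (l ++ [s + σ * d]))) :
    l = (List.range' 1 (d - 1)).map fun k : ℕ => s + σ * k := by
  have hlen : l.length ≤ d - 1 := by simpa using hsub.length_le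
  obtain ⟨τ, hτ, harc⟩ := eq_cycleArc_of_isPathList hpath
  have hlast : s + σ * d = s + τ * (l.length + 1 : ℕ) := by
    have := congrArg List.getLast? harc
    rw [← List.cons_append, List.getLast?_concat] at this
    simpa [cycleArc, List.range_succ] using this
  rcases sign_eq_or_eq_neg hσ hτ with rfl | rfl
  · have := eq_of_add_sign_mul_eq hσ (by omega) (by omega) hlast
    exact hsub.eq_of_length (by simp; omega)
  · -- the path runs around the other side of the cycle, through `s - σ`
    have hwrap : d = n - (l.length + 1) := by
      refine eq_of_add_sign_mul_eq hσ (by omega) (by omega) (hlast.trans ?_)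
      rw [natCast_sub_eq_neg (by omega)]
      ring
    obtain ⟨x, l', rfl⟩ := List.exists_cons_of_ne_nil (l := l) (by rintro rfl; simp at hwrap; omega)
    have hx : x = s + σ * (n - 1 : ℕ) := by
      rw [List.cons_append, List.length_cons, cycleArc_succ, List.cons.injEq] at harc
      rw [natCast_sub_eq_neg (by omega)]
      simpa [cycleArc, List.range_succ_eq_map] using congrArg List.head? harc.2
    obtain ⟨k, hk, hxk⟩ := List.mem_map.mp (hsub.subset List.mem_cons_self)
    rw [List.mem_range'_1] at hk
    have := eq_of_add_sign_mul_eq hσ (by omega) (by omega) (hxk.trans hx)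
    omega

lemma isPathList_map_equiv_iff {V W : Type*} (G : SimpleGraph V) (e : V ≃ W) (l : List W) :
    IsPathList (G.map e.toEmbedding) l ↔ IsPathList G (l.map e.symm) := by
  rw [← comap_symm, IsPathList, IsPathList, List.Chain', List.Chain', List.isChain_map,
    List.nodup_map_iff e.symm.injective]
  rfl

theorem isAdmissible_map_cycleArc (e : Fin n ≃ Fin n) {s : Fin n} (hσ : σ = 1 ∨ σ = -1)
    {d : ℕ} (hdn : d ≤ n - 2) (hlt : e s < e (s + σ * d))
    (hout : ∀ k : ℕ, 0 < k → k < d → e (s + σ * k) < e s ∨ e (s + σ * d) < e (s + σ * k)) :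
    IsAdmissible ((cycleGraph n).map e.toEmbedding) ((cycleArc s σ d).map e) := by
  have hd : 0 < d := Nat.pos_of_ne_zero (by rintro rfl; simp at hlt)
  set inner := (List.range' 1 (d - 1)).map fun k : ℕ => s + σ * k
  have hsplit : (cycleArc s σ d).map e = e s :: (inner.map e ++ [e (s + σ * d)]) := by
    simp [cycleArc_eq_cons_append hd, inner]
  have hinner : ((cycleArc s σ d).map e).tail.dropLast = inner.map e := by
    rw [hsplit, List.tail_cons, List.dropLast_concat]
  refine ⟨e s, e (s + σ * d), hlt, by rw [hsplit]; rfl, ?_, ?_, ?_, ?_⟩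
  · rw [hsplit, ← List.cons_append, List.getLast?_concat]
  · rw [isPathList_map_equiv_iff, List.map_map, Equiv.symm_comp_self, List.map_id]
    exact isPathList_cycleArc (by omega) hσ s (by omega)
  · rw [hinner]
    intro v hv
    simp only [inner, List.map_map, List.mem_map, List.mem_range'_1] at hv
    obtain ⟨k, hk, rfl⟩ := hv
    exact hout k (by omega) (by omega)
  · rw [hinner]
    intro l hsub hne hpath
    rw [isPathList_map_equiv_iff] at hpath
    simp only [List.map_cons, List.map_append, Equiv.symm_apply_apply, List.map_nil]
      at hpath
    have hsub' : (l.map e.symm).Sublist inner := by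
      simpa [List.map_map] using hsub.map e.symm
    apply hne
    calc l = (l.map e.symm).map e := by simp [List.map_map]
      _ = inner.map e := by rw [eq_of_sublist_of_isPathList_cycleGraph hσ hd hdn hsub' hpath]

lemma exists_long_cycleArc_of_not_adj {p q : Fin n} (hpq : p ≠ q)
    (hna : ¬ (cycleGraph n).Adj p q) :
    ∃ σ : Fin n, (σ = 1 ∨ σ = -1) ∧
      ∃ d : ℕ, (n + 1) / 2 ≤ d ∧ d ≤ n - 2 ∧ p + σ * d = q := by
  have hδ0 : q - p ≠ 0 := sub_ne_zero.mpr hpq.symm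
  rw [cycleGraph_adj', not_or, ← neg_sub] at hna
  -- of the two arcs from `p` to `q`, take the one with at least `(n + 1) / 2` edges
  obtain ⟨σ, hσ, hhalf⟩ := exists_sign_half_le_val hδ0
  have hne : σ * (q - p) ≠ 0 ∧ (-(σ * (q - p))).val ≠ 1 := by
    rcases hσ with rfl | rfl
    · simpa only [one_mul] using ⟨hδ0, hna.1⟩
    · simpa only [neg_mul, one_mul, neg_neg, ne_eq, neg_eq_zero] using ⟨hδ0, hna.2⟩
  have hneg := Fin.val_neg (σ * (q - p))
  rw [if_neg hne.1] at hneg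
  refine ⟨σ, hσ, _, hhalf, by have := (σ * (q - p)).isLt; omega, ?_⟩
  rw [Fin.cast_val_eq_self, ← mul_assoc, mul_self_eq_one_of_sign hσ, one_mul, add_sub_cancel]

theorem exists_long_isAdmissible_of_not_adj (e : Fin n ≃ Fin n) {k : ℕ} (hk : k + 1 < n)
    (hna : ¬ ((cycleGraph n).map e.toEmbedding).Adj k (k + 1 : ℕ)) :
    ∃ l, IsAdmissible ((cycleGraph n).map e.toEmbedding) l ∧ (n + 1) / 2 + 1 ≤ l.length := by
  have hk0 : ((k : Fin n) : ℕ) = k := Fin.val_cast_of_lt (by omega)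
  have hk1 : (((k + 1 : ℕ) : Fin n) : ℕ) = k + 1 := Fin.val_cast_of_lt hk
  rw [← comap_symm, comap_adj] at hna
  have hpq : e.symm k ≠ e.symm (k + 1 : ℕ) := by
    rw [Ne, e.symm.injective.eq_iff, Fin.ext_iff, hk0, hk1]
    omega
  obtain ⟨σ, hσ, d, hhalf, hdn, hend⟩ := exists_long_cycleArc_of_not_adj hpq hna
  refine ⟨(cycleArc (e.symm k) σ d).map e, isAdmissible_map_cycleArc e hσ hdn ?_ ?_, ?_⟩
  · simp only [hend, Equiv.apply_symm_apply, Fin.lt_def, hk0, hk1]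
    omega
  · intro j hj0 hjd
    have hne_start : e (e.symm k + σ * j) ≠ k := fun h => by
      have := eq_of_add_sign_mul_eq hσ (k := j) (l := 0) (by omega) (by omega)
        (e.injective (by rw [h, Nat.cast_zero, mul_zero, add_zero, Equiv.apply_symm_apply]))
      omega
    have hne_end : e (e.symm k + σ * j) ≠ (k + 1 : ℕ) := fun h => by
      have := eq_of_add_sign_mul_eq hσ (k := j) (l := d) (by omega) (by omega)
        (e.injective (by rw [h, hend, Equiv.apply_symm_apply]))
      omega
    simp only [hend, Equiv.apply_symm_apply, Fin.lt_def, hk0, hk1]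
    rw [Ne, Fin.ext_iff, hk0] at hne_start
    rw [Ne, Fin.ext_iff, hk1] at hne_end
    omega
  · rw [List.length_map, length_cycleArc]
    omega

lemma exists_sign_symm_natCast_eq_of_forall_adj (e : Fin n ≃ Fin n)
    (hadj : ∀ k : ℕ, k + 1 < n → ((cycleGraph n).map e.toEmbedding).Adj k (k + 1 : ℕ)) :
    ∃ σ : Fin n, (σ = 1 ∨ σ = -1) ∧ ∀ k : ℕ, k < n → e.symm k = e.symm 0 + σ * k := by
  obtain ⟨m, rfl⟩ : ∃ m, n = m + 1 := ⟨n - 1, (Nat.succ_pred_eq_of_pos n.pos_of_neZero).symm⟩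
  have hpath : IsPathList (cycleGraph (m + 1))
      ((List.range (m + 1)).map fun k : ℕ => e.symm k) := by
    refine ⟨?_, List.nodup_range.map_on fun a ha b hb h => ?_⟩
    · rw [List.Chain', List.isChain_map, List.isChain_range_succ]
      intro k hk
      have h := hadj k (by omega)
      rwa [← comap_symm, comap_adj] at h
    · rw [List.mem_range] at ha hb
      simpa [Fin.val_cast_of_lt ha, Fin.val_cast_of_lt hb] using
        congrArg Fin.val (e.symm.injective h)
  have hcons : ((List.range (m + 1)).map fun k : ℕ => e.symm k) =
      e.symm 0 :: (List.range m).map fun k : ℕ => e.symm (k + 1 : ℕ) := by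
    simp [List.range_succ_eq_map]
  rw [hcons] at hpath
  obtain ⟨σ, hσ, harc⟩ := eq_cycleArc_of_isPathList hpath
  rw [← hcons, List.length_map, List.length_range, cycleArc, List.map_inj_left] at harc
  exact ⟨σ, hσ, fun k hk => harc k (List.mem_range.mpr hk)⟩

theorem exists_long_isAdmissible_of_forall_adj (hn : 4 ≤ n) (e : Fin n ≃ Fin n)
    (hadj : ∀ k : ℕ, k + 1 < n → ((cycleGraph n).map e.toEmbedding).Adj k (k + 1 : ℕ)) :
    ∃ l, IsAdmissible ((cycleGraph n).map e.toEmbedding) l ∧ (n + 1) / 2 + 1 ≤ l.length := by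
  obtain ⟨σ, hσ, hpos⟩ := exists_sign_symm_natCast_eq_of_forall_adj e hadj
  -- walking from label `0` against the order of the labels meets `n - 1, n - 2, …`
  have hlabel : ∀ k : ℕ, 0 < k → k < n → e (e.symm 0 + -σ * k) = (n - k : ℕ) := by
    intro k hk0 hkn
    rw [← Equiv.eq_symm_apply, hpos (n - k) (by omega), natCast_sub_eq_neg hkn.le]
    ring
  have hval : ∀ k : ℕ, 0 < k → k < n → ((n - k : ℕ) : Fin n).val = n - k :=
    fun k hk0 _ => Fin.val_cast_of_lt (by omega)
  refine ⟨(cycleArc (e.symm 0) (-σ) ((n + 1) / 2)).map e,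
    isAdmissible_map_cycleArc e (by rcases hσ with rfl | rfl <;> simp) (by omega) ?_ ?_, ?_⟩
  · rw [hlabel _ (by omega) (by omega), Equiv.apply_symm_apply, Fin.lt_def,
      hval _ (by omega) (by omega), Fin.val_zero]
    omega
  · intro k hk0 hkd
    right
    rw [hlabel _ (by omega) (by omega), hlabel _ hk0 (by omega), Fin.lt_def,
      hval _ (by omega) (by omega), hval _ hk0 (by omega)]
    omega
  · rw [List.length_map, length_cycleArc]

end

/-- In every labeling of the cycle `C_n` (`n ≥ 4`) by `{1,…,n}` there is an
admissible path with at least `m` vertices, where `m = n/2 + 1` if `n` is even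
and `m = (n+1)/2 + 1` if `n` is odd. -/
theorem cycle_exists_long_admissible {n : ℕ} (hn : 4 ≤ n)
    (m : ℕ) (hm : m = if Even n then n / 2 + 1 else (n + 1) / 2 + 1) :
    ∀ e : Fin n ≃ Fin n, ∃ l : List (Fin n),
      IsAdmissible ((SimpleGraph.cycleGraph n).map e.toEmbedding) l ∧
      m ≤ l.length := by
  intro e
  have : NeZero n := ⟨by omega⟩
  obtain rfl : m = (n + 1) / 2 + 1 := by
    split_ifs at hm with h
    · obtain ⟨k, rfl⟩ := h
      omega
    · exact hm
  by_cases hadj : ∀ k : ℕ, k + 1 < n → ((cycleGraph n).map e.toEmbedding).Adj k (k + 1 : ℕ)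
  · exact exists_long_isAdmissible_of_forall_adj hn e hadj
  · push Not at hadj
    obtain ⟨k, hk, hna⟩ := hadj
    exact exists_long_isAdmissible_of_not_adj e hk hna
end

section
/- Let G be a simple graph on {1,…,n} whose labeling satisfies the weakly closed condition: for every edge {i,j} ∈ E(G) with j > i + 1 and every k with i < k < j, one has {i,k} ∈ E(G) or {k,j} ∈ E(G). Then every admissible path of G has at most 4 vertices. -/
/-!
By minimality, an admissible path `i, v₁, …, vₘ, j` has no chord from `i` or to `j` that skips
an interior vertex. For `m ≥ 2`, weak closedness of the edge `i v₁` with `j` in between forces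
`v₁ < i`, and symmetrically `vₘ > j`; so some edge `a b` of the path jumps from below `i` to above
`j`. Weak closedness of `a b` with `i`, resp. `j`, in between then yields the chords `i a` and
`b j`, which forces `a = v₁` and `b = vₘ`, i.e. `m = 2`.
-/

namespace List

theorem exists_eq_append_cons_cons_of_mem {α : Type*} {p : α → Prop} {x y : α} {l : List α}
    (hx : p x) (hy : y ∈ x :: l) (hny : ¬ p y) :
    ∃ l₁ a b l₂, x :: l = l₁ ++ a :: b :: l₂ ∧ p a ∧ ¬ p b := by
  by_contra! h
  have hchain : IsChain (fun a b => p a → p b) (x :: l) :=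
    isChain_iff_forall_rel_of_append_cons_cons.mpr fun _ _ _ _ heq => h _ _ _ _ heq
  exact hny (hchain.induction p _ (fun _ _ hab ha => hab ha) (fun _ => hx) y hy)

end List

section

variable {V : Type*} {G : SimpleGraph V}

theorem IsPathList.shortcut {l₁ m l₂ : List V} {a b : V}
    (hP : IsPathList G (l₁ ++ a :: (m ++ b :: l₂))) (hab : G.Adj a b) :
    IsPathList G (l₁ ++ a :: b :: l₂) := by
  obtain ⟨hchain, hnodup⟩ := hP
  rw [List.Chain', List.isChain_split, List.isChain_cons_split] at hchain
  refine ⟨List.isChain_append_cons_cons.mpr ⟨hchain.1, hab, hchain.2.2⟩, hnodup.sublist ?_⟩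
  exact List.Sublist.append_left ((List.sublist_append_right m _).cons_cons a) l₁

theorem IsPathList.adj_of_eq_append_cons_cons {l l₁ l₂ : List V} {a b : V}
    (hP : IsPathList G l) (hl : l = l₁ ++ a :: b :: l₂) : G.Adj a b :=
  List.isChain_iff_forall_rel_of_append_cons_cons.mp hP.1 hl

/-- `t` is the interior of a path from `i` to `j`, and no proper sublist of `t` is. -/
def IsMinimalPath (G : SimpleGraph V) (i j : V) (t : List V) : Prop :=
  IsPathList G (i :: (t ++ [j])) ∧
    ∀ t' : List V, t'.Sublist t → t' ≠ t → ¬ IsPathList G (i :: (t' ++ [j]))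

namespace IsMinimalPath

variable {i j : V} {t : List V}

theorem not_adj_left (hP : IsMinimalPath G i j t) {t₁ t₂ : List V} {y : V}
    (ht : t = t₁ ++ y :: t₂) (ht₁ : t₁ ≠ []) : ¬ G.Adj i y := by
  intro hiy
  refine hP.2 (y :: t₂) (ht ▸ List.sublist_append_right t₁ _) ?_ ?_
  · intro h
    have := congrArg List.length (h.trans ht)
    simp only [List.length_append, List.length_cons] at this
    exact ht₁ (List.length_eq_zero_iff.mp (by omega))
  · have := hP.1
    rw [ht] at this
    simpa using IsPathList.shortcut (l₁ := []) (by simpa using this) hiy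

theorem not_adj_right (hP : IsMinimalPath G i j t) {t₁ t₂ : List V} {x : V}
    (ht : t = t₁ ++ x :: t₂) (ht₂ : t₂ ≠ []) : ¬ G.Adj x j := by
  intro hxj
  refine hP.2 (t₁ ++ [x]) (by simp [ht]) (by simp [ht, ht₂]) ?_
  have := hP.1
  rw [ht] at this
  simpa using IsPathList.shortcut (l₁ := i :: t₁) (l₂ := []) (by simpa using this) hxj

theorem not_adj_ends (hP : IsMinimalPath G i j t) (ht : t ≠ []) : ¬ G.Adj i j := by
  intro hij
  refine hP.2 [] (List.nil_sublist t) ht.symm ?_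
  simpa using IsPathList.shortcut (l₁ := []) (l₂ := []) (by simpa using hP.1) hij

end IsMinimalPath

end

/-- The weakly closed condition; its clause `j > i + 1` is implied by `a < k < b`. -/
def SimpleGraph.IsWeaklyClosed {V : Type*} [LinearOrder V] (G : SimpleGraph V) : Prop :=
  ∀ ⦃a k b : V⦄, a < k → k < b → G.Adj a b → G.Adj a k ∨ G.Adj k b

namespace IsMinimalPath

variable {V : Type*} [LinearOrder V] {G : SimpleGraph V} {i j : V} {t : List V}

theorem head_lt (hG : G.IsWeaklyClosed) (hP : IsMinimalPath G i j t) (hij : i < j)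
    (hint : ∀ v ∈ t, v < i ∨ j < v) {v : V} {rest : List V} (ht : t = v :: rest)
    (hrest : rest ≠ []) : v < i := by
  refine (hint v (by simp [ht])).resolve_right fun hjv => ?_
  have hiv : G.Adj i v :=
    hP.1.adj_of_eq_append_cons_cons (l₁ := []) (l₂ := rest ++ [j]) (by simp [ht])
  rcases hG hij hjv hiv with hij' | hjv'
  · exact hP.not_adj_ends (by simp [ht]) hij'
  · exact hP.not_adj_right (t₁ := []) ht hrest hjv'.symm

theorem lt_getLast (hG : G.IsWeaklyClosed) (hP : IsMinimalPath G i j t) (hij : i < j)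
    (hint : ∀ v ∈ t, v < i ∨ j < v) {v : V} {rest : List V} (ht : t = rest ++ [v])
    (hrest : rest ≠ []) : j < v := by
  refine (hint v (by simp [ht])).resolve_left fun hvi => ?_
  have hvj : G.Adj v j :=
    hP.1.adj_of_eq_append_cons_cons (l₁ := i :: rest) (l₂ := []) (by simp [ht])
  rcases hG hvi hij hvj with hvi' | hij'
  · exact hP.not_adj_left (t₂ := []) ht hrest hvi'.symm
  · exact hP.not_adj_ends (by simp [ht]) hij'

theorem length_le_two (hG : G.IsWeaklyClosed) (hP : IsMinimalPath G i j t) (hij : i < j)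
    (hint : ∀ v ∈ t, v < i ∨ j < v) : t.length ≤ 2 := by
  by_contra! hlen
  obtain ⟨v, rest, hvrest⟩ := List.exists_cons_of_length_pos (by omega : 0 < t.length)
  obtain ⟨init, w, hinit⟩ : ∃ init w, t = init ++ [w] :=
    ⟨_, _, (List.dropLast_append_getLast (by simp [hvrest])).symm⟩
  have hv : v < i := hP.head_lt hG hij hint hvrest (by rintro rfl; simp [hvrest] at hlen)
  have hw : j < w := hP.lt_getLast hG hij hint hinit (by rintro rfl; simp [hinit] at hlen)
  obtain ⟨t₁, a, b, t₂, ht, ha, hb⟩ := List.exists_eq_append_cons_cons_of_mem (p := (· < i)) hv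
    (show w ∈ v :: rest by simp [← hvrest, hinit]) (not_lt.mpr (hij.trans hw).le)
  rw [← hvrest] at ht
  have hjb : j < b := (hint b (by simp [ht])).resolve_left hb
  have hab : G.Adj a b :=
    hP.1.adj_of_eq_append_cons_cons (l₁ := i :: t₁) (l₂ := t₂ ++ [j]) (by simp [ht])
  have ht₁ : t₁ = [] := by
    rcases hG ha (hij.trans hjb) hab with hai | hib
    · by_contra h
      exact hP.not_adj_left ht h hai.symm
    · exact absurd hib (hP.not_adj_left (t₁ := t₁ ++ [a]) (t₂ := t₂) (by simp [ht]) (by simp))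
  have ht₂ : t₂ = [] := by
    rcases hG (ha.trans hij) hjb hab with haj | hjb'
    · exact absurd haj (hP.not_adj_right ht (by simp))
    · by_contra h
      exact hP.not_adj_right (t₁ := t₁ ++ [a]) (by simp [ht]) h hjb'.symm
  simp [ht, ht₁, ht₂] at hlen

end IsMinimalPath

theorem IsAdmissible.exists_eq_cons_append {n : ℕ} {G : SimpleGraph (Fin n)} {l : List (Fin n)}
    (h : IsAdmissible G l) :
    ∃ i j t, l = i :: (t ++ [j]) ∧ i < j ∧ IsMinimalPath G i j t ∧ ∀ v ∈ t, v < i ∨ j < v := by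
  obtain ⟨i, j, hij, hhead, hlast, hpath, hint, hmin⟩ := h
  obtain ⟨a, l₂, rfl⟩ := List.exists_cons_of_ne_nil (l := l) (by rintro rfl; simp at hhead)
  obtain rfl : a = i := by simpa using hhead
  obtain rfl | ⟨t, b, rfl⟩ := l₂.eq_nil_or_concat'
  · simp at hlast
    exact absurd hlast hij.ne
  obtain rfl : b = j := by
    rw [← List.cons_append, List.getLast?_concat] at hlast
    simpa using hlast
  simp only [List.tail_cons, List.dropLast_concat] at hint hmin
  exact ⟨a, b, t, rfl, hij, ⟨hpath, hmin⟩, hint⟩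

/-- If the labeling of `G` satisfies the weakly closed condition, then every
admissible path of `G` has at most 4 vertices. -/
theorem weakly_closed_admissible_le_four {n : ℕ} (G : SimpleGraph (Fin n))
    (hwc : ∀ i j : Fin n, G.Adj i j → (i : ℕ) + 1 < (j : ℕ) →
      ∀ k : Fin n, i < k → k < j → G.Adj i k ∨ G.Adj k j) :
    ∀ l : List (Fin n), IsAdmissible G l → l.length ≤ 4 := by
  have hG : G.IsWeaklyClosed := fun a k b hak hkb hab =>
    hwc a b hab (by omega) k hak hkb
  intro l hl
  obtain ⟨i, j, t, rfl, hij, hP, hint⟩ := hl.exists_eq_cons_append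
  have := hP.length_le_two hG hij hint
  simp only [List.length_cons, List.length_append, List.length_nil]
  omega
end

section
/- Let T be the tree with 16 vertices consisting of a center vertex c, five branch vertices b_1,…,b_5 each adjacent to c, and ten leaves, where each branch vertex b_k is adjacent to exactly two leaves. Then there is no bijective labeling of the vertices of T by {1,…,16} such that the graph distance d(i, i+1) ≤ 2 for all 1 ≤ i ≤ 15. -/
/-- The spider-like tree on 16 vertices: center `0`, branch vertices `1,…,5`
adjacent to `0`, and for each branch vertex `k` two leaves `2k+4` and `2k+5`. -/
def spiderTree : SimpleGraph (Fin 16) :=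
  SimpleGraph.fromEdgeSet
    {s(0, 1), s(0, 2), s(0, 3), s(0, 4), s(0, 5),
     s(1, 6), s(1, 7), s(2, 8), s(2, 9), s(3, 10), s(3, 11),
     s(4, 12), s(4, 13), s(5, 14), s(5, 15)}

/-!
Listing the vertices in label order gives a Hamiltonian path `W` (the path graph pulled back
along the labeling) all of whose edges join vertices at distance at most two in `T`. The only
vertices within distance two of a leaf are its sibling, its branch vertex and the centre. So if
both leaves of a branch have two `W`-neighbours and neither is `W`-adjacent to the centre, the two
leaves and their branch vertex span a triangle of `W`, which a path does not contain. Hence every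
one of the five branches has a leaf whose label is `1`, `16`, or next to the label of the centre,
and there are at most four such labels.
-/
namespace SimpleGraph

variable {V W : Type*} {G : SimpleGraph V} {u v : V}

def WithinDistTwo (G : SimpleGraph V) (u v : V) : Prop :=
  u = v ∨ G.Adj u v ∨ ∃ w, G.Adj u w ∧ G.Adj w v

instance [Fintype V] [DecidableEq V] [DecidableRel G.Adj] : DecidableRel G.WithinDistTwo :=
  fun _ _ => inferInstanceAs (Decidable (_ ∨ _ ∨ ∃ _, _))

theorem Reachable.withinDistTwo_of_dist_le_two (hr : G.Reachable u v) (h : G.dist u v ≤ 2) :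
    G.WithinDistTwo u v := by
  by_contra hfar
  simp only [WithinDistTwo, not_or, not_exists, not_and] at hfar
  obtain ⟨hne, hnadj, hcommon⟩ := hfar
  have h2 : 2 < G.edist u v := two_lt_edist_iff.mpr
    ⟨hne, hnadj, Set.eq_empty_of_forall_notMem fun w hw => hcommon w hw.1 hw.2.symm⟩
  rw [← hr.coe_dist_eq_edist] at h2
  exact h.not_gt (by exact_mod_cast h2)

theorem connected_of_forall_withinDistTwo (c : V) (h : ∀ v, G.WithinDistTwo c v) :
    G.Connected := by
  refine (connected_iff_exists_forall_reachable G).mpr ⟨c, fun v => ?_⟩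
  rcases h v with rfl | hadj | ⟨w, hcw, hwv⟩
  · rfl
  · exact hadj.reachable
  · exact hcw.reachable.trans hwv.reachable

theorem Connected.dist_le_dist_map (hG : G.Connected) (e : V ≃ W) (u v : V) :
    G.dist u v ≤ (G.map e.toEmbedding).dist (e u) (e v) := by
  have hconn : (G.map e.toEmbedding).Connected := (Iso.map e G).connected_iff.mp hG
  obtain ⟨w, hw⟩ := hconn.exists_walk_length_eq_dist (e u) (e v)
  calc G.dist u v ≤ (w.map (Iso.map e G).symm.toHom).length := by
        simpa using dist_le (w.map (Iso.map e G).symm.toHom)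
    _ = _ := by rw [Walk.length_map, hw]

theorem adj_of_neighborSet_nontrivial_of_subset_pair {a b x : V}
    (hne : (G.neighborSet a).Nontrivial) (hsub : G.neighborSet a ⊆ {b, x}) :
    G.Adj a b ∧ G.Adj a x := by
  obtain ⟨y, hy, z, hz, hyz⟩ := hne
  rcases Set.subset_pair_iff.mp hsub y hy with rfl | rfl <;>
    rcases Set.subset_pair_iff.mp hsub z hz with rfl | rfl
  exacts [absurd rfl hyz, ⟨hy, hz⟩, ⟨hz, hy⟩, absurd rfl hyz]

theorem CliqueFree.false_of_neighborSet_subset_pair (hG : G.CliqueFree 3) {a b x : V}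
    (ha : (G.neighborSet a).Nontrivial) (hb : (G.neighborSet b).Nontrivial)
    (ha' : G.neighborSet a ⊆ {b, x}) (hb' : G.neighborSet b ⊆ {a, x}) : False := by
  obtain ⟨hab, hax⟩ := adj_of_neighborSet_nontrivial_of_subset_pair ha ha'
  obtain ⟨-, hbx⟩ := adj_of_neighborSet_nontrivial_of_subset_pair hb hb'
  classical
  exact hG {a, b, x} (is3Clique_triple_iff.mpr ⟨hab, hax, hbx⟩)

theorem pathGraph_cliqueFree_three (n : ℕ) : (pathGraph n).CliqueFree 3 := by
  intro s hs
  obtain ⟨a, b, c, hab, hac, hbc, -⟩ := is3Clique_iff.mp hs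
  simp only [pathGraph_adj] at hab hac hbc
  omega

theorem pathGraph_neighborSet_nontrivial {n : ℕ} {i : Fin n} (h0 : (i : ℕ) ≠ 0)
    (hn : (i : ℕ) + 1 ≠ n) : ((pathGraph n).neighborSet i).Nontrivial := by
  refine ⟨⟨i - 1, by omega⟩, ?_, ⟨i + 1, by omega⟩, ?_, ?_⟩ <;>
    simp only [mem_neighborSet, pathGraph_adj, ne_eq, Fin.mk.injEq, true_or] <;> omega

theorem withinDistTwo_of_pathGraph_adj {n : ℕ} (hG : G.Connected) {e : V ≃ Fin n}
    (he : ∀ i j : Fin n, (j : ℕ) = (i : ℕ) + 1 → (G.map e.toEmbedding).dist i j ≤ 2)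
    (h : (pathGraph n).Adj (e u) (e v)) : G.WithinDistTwo u v := by
  refine (hG.preconnected u v).withinDistTwo_of_dist_le_two ((hG.dist_le_dist_map e u v).trans ?_)
  rcases pathGraph_adj.mp h with h | h
  · exact he _ _ h.symm
  · exact dist_comm (G := G.map e.toEmbedding) ▸ he _ _ h.symm

end SimpleGraph

open SimpleGraph

instance : DecidableRel spiderTree.Adj := fun a b =>
  decidable_of_iff (s(a, b) ∈ ({s(0, 1), s(0, 2), s(0, 3), s(0, 4), s(0, 5),
     s(1, 6), s(1, 7), s(2, 8), s(2, 9), s(3, 10), s(3, 11),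
     s(4, 12), s(4, 13), s(5, 14), s(5, 15)} : Finset (Sym2 (Fin 16))) ∧ a ≠ b) (by
    rw [spiderTree, fromEdgeSet_adj]
    simp)

def spiderBranch (k : Fin 5) : Fin 16 := ⟨k + 1, by omega⟩

def spiderLeaf (k : Fin 5) (i : Fin 2) : Fin 16 := ⟨2 * k + 6 + i, by omega⟩

theorem spiderTree_withinDistTwo_zero : ∀ v, spiderTree.WithinDistTwo 0 v := by
  decide

theorem spiderTree_connected : spiderTree.Connected :=
  connected_of_forall_withinDistTwo 0 spiderTree_withinDistTwo_zero

theorem spiderTree_withinDistTwo_spiderLeaf :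
    ∀ k i v, spiderTree.WithinDistTwo (spiderLeaf k i) v →
      v = spiderLeaf k i ∨ v = 0 ∨ v = spiderBranch k ∨ v = spiderLeaf k i.rev := by
  decide

theorem eq_of_spiderLeaf_eq : ∀ {k k' i i'}, spiderLeaf k i = spiderLeaf k' i' → k = k' := by
  decide

theorem neighborSet_spiderLeaf_subset {e : Fin 16 ≃ Fin 16}
    (he : ∀ u v, (pathGraph 16).Adj (e u) (e v) → spiderTree.WithinDistTwo u v)
    {k : Fin 5} {i : Fin 2}
    (hc : ¬ (pathGraph 16).Adj (e 0) (e (spiderLeaf k i))) :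
    (pathGraph 16).neighborSet (e (spiderLeaf k i)) ⊆
      {e (spiderLeaf k i.rev), e (spiderBranch k)} := by
  intro q hq
  obtain ⟨v, rfl⟩ := e.surjective q
  rcases spiderTree_withinDistTwo_spiderLeaf k i v (he _ _ hq) with rfl | rfl | rfl | rfl
  · exact absurd hq (pathGraph 16).irrefl
  · exact absurd hq.symm hc
  · exact Or.inr rfl
  · exact Or.inl rfl

theorem exists_spiderLeaf_end_or_adj_center {e : Fin 16 ≃ Fin 16}
    (he : ∀ u v, (pathGraph 16).Adj (e u) (e v) → spiderTree.WithinDistTwo u v) (k : Fin 5) :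
    ∃ i, (e (spiderLeaf k i) : ℕ) = 0 ∨ (e (spiderLeaf k i) : ℕ) = 15 ∨
      (pathGraph 16).Adj (e 0) (e (spiderLeaf k i)) := by
  by_contra! h
  have hnt i := pathGraph_neighborSet_nontrivial (h i).1 (by have := (h i).2.1; omega)
  exact (pathGraph_cliqueFree_three 16).false_of_neighborSet_subset_pair (hnt 0) (hnt 1)
    (neighborSet_spiderLeaf_subset he (h 0).2.2) (neighborSet_spiderLeaf_subset he (h 1).2.2)

/-- There is no labeling of the spider tree by `{1,…,16}` such that
`d(i, i+1) ≤ 2` for all `1 ≤ i ≤ 15`. -/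
theorem spiderTree_no_labeling :
    ¬ ∃ e : Fin 16 ≃ Fin 16, ∀ i j : Fin 16, (j : ℕ) = (i : ℕ) + 1 →
        (spiderTree.map e.toEmbedding).dist i j ≤ 2 := by
  rintro ⟨e, he⟩
  choose i hi using exists_spiderLeaf_end_or_adj_center fun u v h =>
    withinDistTwo_of_pathGraph_adj spiderTree_connected he h
  have hslot (k : Fin 5) : (e (spiderLeaf k (i k)) : ℕ) ∈
      ({0, 15, (e 0 : ℕ) - 1, (e 0 : ℕ) + 1} : Finset ℕ) := by
    have h := hi k
    rw [pathGraph_adj] at h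
    simp only [Finset.mem_insert, Finset.mem_singleton]
    omega
  have h5le4 := (Finset.card_le_card_of_injOn (s := Finset.univ) _ (fun k _ => hslot k)
    fun k _ k' _ h => eq_of_spiderLeaf_eq (e.injective (Fin.ext h))).trans Finset.card_le_four
  simp at h5le4
end

section
/- Let T be a caterpillar tree with n vertices and central path v_1, …, v_ℓ, and let v be any vertex of the central path. Then there exists a bijective labeling of the vertices of T by {1,…,n} such that v receives label 1 and d(i, i+1) ≤ 2 for all 1 ≤ i < n, where d denotes graph distance. -/
open List Finset SimpleGraph

lemma exists_equiv_fin_of_isChain {V : Type*} [Fintype V] {R : V → V → Prop} {L : List V}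
    {n : ℕ} (hnd : L.Nodup) (hmem : ∀ x, x ∈ L) (hR : L.IsChain R)
    (hcard : Fintype.card V = n) :
    ∃ e : V ≃ Fin n, (∀ x ∈ L.head?, (e x : ℕ) = 0) ∧
      ∀ i j : Fin n, (j : ℕ) = i + 1 → R (e.symm i) (e.symm j) := by
  classical
  have hlen : L.length = n := by
    rw [← hcard, ← toFinset_card_of_nodup hnd, ← Finset.card_univ]
    congr 1
    ext x
    simp [hmem]
  let e := (hnd.getEquivOfForallMemList L hmem).symm.trans (finCongr hlen)
  have he : ∀ i, e.symm i = L[(i : ℕ)] := fun i => rfl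
  refine ⟨e, fun x hx => ?_, fun i j hij => ?_⟩
  · have hpos : 0 < L.length := length_pos_iff_exists_mem.2 ⟨x, hmem x⟩
    have hx0 : e.symm ⟨0, hlen ▸ hpos⟩ = x := by
      simpa [he, head?_eq_getElem?, hpos] using hx
    rw [← hx0, e.apply_symm_apply]
  · have hi : (i : ℕ) + 1 < L.length := by have := j.isLt; omega
    simpa only [he, hij] using isChain_iff_getElem.1 hR i hi

section OffSpineFiber

variable {V : Type*} [Fintype V] [DecidableEq V] (S : List V) (g : V → V)

noncomputable def offSpineFiber (s : V) : List V :=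
  (univ.filter fun x => x ∉ S ∧ g x = s).toList

variable {S g}

@[simp]
lemma mem_offSpineFiber {s x : V} : x ∈ offSpineFiber S g s ↔ x ∉ S ∧ g x = s := by
  simp [offSpineFiber]

lemma mem_append_flatMap_offSpineFiber {x : V} (hx : x ∈ S ∨ g x ∈ S) :
    x ∈ S ++ S.flatMap (offSpineFiber S g) := by
  by_cases hxS : x ∈ S <;> simp_all

lemma nodup_append_flatMap_offSpineFiber (hS : S.Nodup) :
    (S ++ S.flatMap (offSpineFiber S g)).Nodup := by
  refine nodup_append.2 ⟨hS, nodup_flatMap.2 ⟨fun s _ => nodup_toList _, ?_⟩, ?_⟩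
  · exact hS.imp fun hne x hx hx' => hne <| by simp_all
  · simp only [mem_flatMap, mem_offSpineFiber]
    rintro x hx _ ⟨_, _, hx', _⟩ rfl
    exact hx' hx

end OffSpineFiber

section Zigzag

variable {V : Type*} (F : V → List V)

/-- `zigzag F (s₁ :: s₂ :: s₃ :: …)` lists `s₁, F s₂, s₃, F s₄, …` out to the end and the
remaining vertices on the way back, ending with `s₂, F s₁` (up to the order inside each `F sᵢ`). -/
def zigzag : List V → List V
  | [] => []
  | s :: tl => s :: ((zigzag tl).reverse ++ F s)

lemma zigzag_perm (σ : List V) : zigzag F σ ~ σ ++ σ.flatMap F := by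
  induction σ with
  | nil => simp [zigzag]
  | cons s tl ih =>
    rw [zigzag, cons_append, flatMap_cons, perm_cons]
    calc (zigzag F tl).reverse ++ F s ~ (tl ++ tl.flatMap F) ++ F s :=
          ((reverse_perm _).trans ih).append_right _
      _ = tl ++ (tl.flatMap F ++ F s) := append_assoc ..
      _ ~ tl ++ (F s ++ tl.flatMap F) := perm_append_comm.append_left _

lemma head?_zigzag (σ : List V) : (zigzag F σ).head? = σ.head? := by
  cases σ <;> rfl

lemma zigzag_append_zigzag_reverse_perm (l₁ : List V) (v : V) (l₂ : List V) :
    zigzag F (v :: l₂) ++ zigzag F l₁.reverse ~ (l₁ ++ v :: l₂) ++ (l₁ ++ v :: l₂).flatMap F := by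
  classical
  refine ((zigzag_perm F _).append ((zigzag_perm F _).trans
    ((reverse_perm _).append ((reverse_perm _).flatMap_right F)))).trans ?_
  rw [perm_iff_count]
  intro x
  simp only [flatMap_append, count_append]
  omega

end Zigzag

namespace SimpleGraph

variable {V W : Type*} {G : SimpleGraph V}

lemma edist_le_one_of_adj {a b : V} (h : G.Adj a b) : G.edist a b ≤ 1 :=
  (edist_eq_one_iff_adj.2 h).le

lemma edist_le_two_of_edist_le_one {a b c : V} (hab : G.edist a b ≤ 1)
    (hbc : G.edist b c ≤ 1) : G.edist a c ≤ 2 :=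
  G.edist_triangle.trans <| (add_le_add hab hbc).trans_eq one_add_one_eq_two

lemma Hom.edist_le {G' : SimpleGraph W} (f : G →g G') (a b : V) :
    G'.edist (f a) (f b) ≤ G.edist a b := by
  by_cases h : G.Reachable a b
  · obtain ⟨w, hw⟩ := h.exists_walk_length_eq_edist
    rw [← hw, ← w.length_map f]
    exact SimpleGraph.edist_le _
  · rw [← edist_ne_top_iff_reachable, not_not] at h
    simp [h]

lemma dist_map_equiv_le {e : V ≃ W} {a b : V} {k : ℕ} (h : G.edist a b ≤ k) :
    (G.map e.toEmbedding).dist (e a) (e b) ≤ k :=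
  ENat.toNat_le_of_le_natCast <| ((Iso.map e G).toHom.edist_le a b).trans h

variable {F : V → List V}

lemma edist_getLast?_zigzag_le_one (hF : ∀ s, ∀ x ∈ F s, G.Adj s x) {s : V} {tl : List V}
    (hσ : (s :: tl).IsChain G.Adj) : ∀ x ∈ (zigzag F (s :: tl)).getLast?, G.edist s x ≤ 1 := by
  intro x hx
  simp only [zigzag, getLast?_cons, getLast?_append, getLast?_reverse, head?_zigzag,
    Option.mem_some_iff] at hx
  subst hx
  rcases hlast : (F s).getLast? with _ | y
  · rcases hhead : tl.head? with _ | t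
    · simp
    · exact edist_le_one_of_adj ((isChain_cons.1 hσ).1 t hhead)
  · exact edist_le_one_of_adj (hF s y (mem_of_mem_getLast? hlast))

lemma isChain_zigzag (hF : ∀ s, ∀ x ∈ F s, G.Adj s x) {σ : List V} (hσ : σ.IsChain G.Adj) :
    (zigzag F σ).IsChain (fun a b => G.edist a b ≤ 2) := by
  induction σ with
  | nil => exact .nil
  | cons s tl ih =>
    have hspine : ∀ t ∈ tl.head?, G.Adj s t := (isChain_cons.1 hσ).1
    have hleaves : ∀ x ∈ F s, ∀ y ∈ F s, G.edist x y ≤ 2 := fun x hx y hy =>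
      edist_le_two_of_edist_le_one (edist_le_one_of_adj (hF s x hx).symm)
        (edist_le_one_of_adj (hF s y hy))
    rw [zigzag, isChain_cons, isChain_append, isChain_reverse, head?_append, head?_reverse,
      getLast?_reverse, head?_zigzag]
    refine ⟨fun y hy => ?_, (ih hσ.tail).imp fun a b h => by rwa [edist_comm],
      (pairwise_of_forall_mem_list hleaves).isChain, fun t ht y hy =>
        edist_le_two_of_edist_le_one (edist_le_one_of_adj (hspine t ht).symm)
          (edist_le_one_of_adj (hF s y (mem_of_mem_head? hy)))⟩
    cases tl with
    | nil =>
      simp only [zigzag, getLast?_nil, Option.none_or] at hy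
      exact (edist_le_one_of_adj (hF s y (mem_of_mem_head? hy))).trans (by norm_num)
    | cons t tl' =>
      have hlast : y ∈ (zigzag F (t :: tl')).getLast? := by
        simpa only [zigzag, getLast?_cons, Option.some_or] using hy
      exact edist_le_two_of_edist_le_one (edist_le_one_of_adj (hspine t rfl))
        (edist_getLast?_zigzag_le_one hF hσ.tail y hlast)

lemma isChain_zigzag_append_zigzag_reverse (hF : ∀ s, ∀ x ∈ F s, G.Adj s x) {l₁ l₂ : List V}
    {v : V} (hσ : (l₁ ++ v :: l₂).IsChain G.Adj) :
    (zigzag F (v :: l₂) ++ zigzag F l₁.reverse).IsChain (fun a b => G.edist a b ≤ 2) := by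
  obtain ⟨h₁, h₂, hv⟩ := isChain_append.1 hσ
  refine isChain_append.2 ⟨isChain_zigzag hF h₂, isChain_zigzag hF ?_, fun x hx y hy => ?_⟩
  · exact isChain_reverse.2 (h₁.imp fun a b h => h.symm)
  · rw [head?_zigzag, head?_reverse] at hy
    rw [edist_comm]
    exact edist_le_two_of_edist_le_one (edist_le_one_of_adj (hv y hy v rfl))
      (edist_getLast?_zigzag_le_one hF h₂ x hx)

end SimpleGraph

theorem caterpillar_labeling_first_vertex_general {V : Type*} [Fintype V] {n : ℕ}
    (T : SimpleGraph V) (hcard : Fintype.card V = n)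
    (u w : V) (p : T.Walk u w) (hp : p.IsPath)
    (hcover : ∀ x : V, x ∈ p.support ∨ ∃ y ∈ p.support, T.Adj x y)
    (v : V) (hv : v ∈ p.support) :
    ∃ e : V ≃ Fin n, (e v : ℕ) = 0 ∧
      ∀ i j : Fin n, (j : ℕ) = (i : ℕ) + 1 → (T.map e.toEmbedding).dist i j ≤ 2 := by
  classical
  choose! g hg using fun x (hx : x ∉ p.support) => (hcover x).resolve_left hx
  have hF : ∀ s, ∀ x ∈ offSpineFiber p.support g s, T.Adj s x := fun s x hx => by
    obtain ⟨hxS, rfl⟩ := mem_offSpineFiber.1 hx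
    exact (hg x hxS).2.symm
  obtain ⟨l₁, l₂, hsplit⟩ := append_of_mem hv
  have hperm := zigzag_append_zigzag_reverse_perm (offSpineFiber p.support g) l₁ v l₂
  rw [← hsplit] at hperm
  obtain ⟨e, he0, he⟩ := exists_equiv_fin_of_isChain
    (hperm.nodup_iff.2 (nodup_append_flatMap_offSpineFiber hp.support_nodup))
    (fun x => hperm.mem_iff.2 <| mem_append_flatMap_offSpineFiber <|
      (em _).imp_right fun hx => (hg x hx).1)
    (isChain_zigzag_append_zigzag_reverse hF (hsplit ▸ p.isChain_adj_support)) hcard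
  refine ⟨e, he0 v rfl, fun i j hij => ?_⟩
  simpa using dist_map_equiv_le (e := e) (he i j hij)

/-- A caterpillar tree with `n` vertices, central path `p`, and a vertex `v`
of the central path admits a labeling by `{1,…,n}` assigning label `1`
(here `0 : Fin n`) to `v` such that `d(i, i+1) ≤ 2` for all `1 ≤ i < n`. -/
theorem caterpillar_labeling_first_vertex {V : Type*} [Fintype V] {n : ℕ}
    (T : SimpleGraph V) (hT : T.IsTree) (hcard : Fintype.card V = n)
    (u w : V) (p : T.Walk u w) (hp : p.IsPath)
    (hcover : ∀ x : V, x ∈ p.support ∨ ∃ y ∈ p.support, T.Adj x y)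
    (v : V) (hv : v ∈ p.support) :
    ∃ e : V ≃ Fin n, (e v : ℕ) = 0 ∧
      ∀ i j : Fin n, (j : ℕ) = (i : ℕ) + 1 → (T.map e.toEmbedding).dist i j ≤ 2 :=
  caterpillar_labeling_first_vertex_general T hcard u w p hp hcover v hv
end

section
/- Let T be a caterpillar tree with central path v_1, …, v_ℓ (ℓ ≥ 3) and let S be a nonempty subset of the vertices of T. Define c(S) as the number of connected components of the induced subgraph of T on V(T) ∖ S. Then c(S∖{v}) < c(S) for every v ∈ S if and only if S = {v_{i_1}, …, v_{i_k}} with 1 < i_1 < ⋯ < i_k < ℓ and: whenever deg(v_{i_j}) = 2, both path-neighbors v_{i_j − 1} and v_{i_j + 1} of v_{i_j} on the central path do not belong to S; and whenever deg(v_{i_j}) = 3, at least one of v_{i_j − 1}, v_{i_j + 1} does not belong to S. -/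
/-!
Adding a vertex `v ∈ S` back to the forest `T - S` leaves every component of `T - S` that is not
adjacent to `v` untouched and merges those adjacent to `v` together with `v` into one. In a forest
distinct neighbours of `v` lie in distinct components of `T - S`, so
`c(S \ {v}) = c(S) + 1 - |N(v) \ S|`, and the condition `c(S \ {v}) < c(S)` says that `v` has at
least two neighbours outside `S`.

In a caterpillar every vertex off the central path is a leaf, and so are the two ends of the
central path since it is a longest path; hence such a `v` is an interior vertex `v_k` of the
central path. As `T` is a tree, the only neighbours of `v_k` on the path are `v_{k-1}` and
`v_{k+1}`, so `|N(v_k) \ S| = deg v_k - |{v_{k-1}, v_{k+1}} ∩ S|`, which is at least `2` exactly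
under the stated degree conditions.
-/

open Finset in
theorem Finset.two_le_card_sdiff_iff {α : Type*} [DecidableEq α] {N S : Finset α} {a b : α}
    (hab : a ≠ b) (ha : a ∈ N) (hb : b ∈ N) (hNS : ∀ x ∈ N, x ∈ S → x = a ∨ x = b) :
    2 ≤ #(N \ S) ↔ (#N = 2 → a ∉ S ∧ b ∉ S) ∧ (#N = 3 → a ∉ S ∨ b ∉ S) := by
  have hN : 2 ≤ #N := by
    simpa [card_pair hab] using card_le_card (insert_subset ha (singleton_subset_iff.mpr hb))
  have hinter : N ∩ S = ({a, b} : Finset α).filter (· ∈ S) := by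
    ext x
    simp only [mem_inter, mem_filter, mem_insert, mem_singleton]
    constructor
    · exact fun ⟨hxN, hxS⟩ => ⟨hNS x hxN hxS, hxS⟩
    · rintro ⟨rfl | rfl, hxS⟩ <;> tauto
  have hsplit := card_sdiff_add_card_inter N S
  rw [hinter] at hsplit
  by_cases haS : a ∈ S <;> by_cases hbS : b ∈ S <;>
    simp only [filter_insert, filter_singleton, haS, hbS, if_true, if_false, card_pair hab,
      card_singleton, card_empty, not_true, not_false_eq_true, and_true, and_false, or_true,
      or_false, imp_false, implies_true, iff_true, insert_empty_eq] at hsplit ⊢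
  all_goals omega

namespace SimpleGraph

variable {V : Type*} {G : SimpleGraph V}

section ComponentCompl

variable {L : Set V} {v : V}

theorem ComponentCompl.exists_adj_of_walk_of_notMem (C : G.ComponentCompl L)
    {y z : ↥(L \ {v})ᶜ} (W : (G.induce (L \ {v})ᶜ).Walk y z) (hy : y.1 ∈ C)
    (hz : z.1 ∉ C) :
    ∃ x ∈ C, G.Adj x v := by
  obtain ⟨d, -, hd₁, hd₂⟩ := W.exists_boundary_dart {w | w.1 ∈ C} hy hz
  by_cases hdv : d.snd.1 = v
  · have hadj : G.Adj d.fst.1 d.snd.1 := d.adj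
    rw [hdv] at hadj
    exact ⟨_, hd₁, hadj⟩
  · have hdL : d.snd.1 ∉ L := fun h => d.snd.2 ⟨h, hdv⟩
    exact absurd (mem_of_adj _ _ hd₁ hdL d.adj) hd₂

theorem ComponentCompl.hom_eq_componentComplMk_iff (hv : v ∈ L) (C : G.ComponentCompl L) :
    C.hom Set.sdiff_subset = G.componentComplMk (K := L \ {v}) (v := v) (by simp) ↔
      ∃ x ∈ C, G.Adj x v := by
  induction C using ComponentCompl.ind with | f hy => ?_
  constructor
  · intro h
    obtain ⟨W⟩ := ConnectedComponent.exact h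
    exact exists_adj_of_walk_of_notMem _ W (componentComplMk_mem G hy) (notMem_of_mem · hv)
  · rintro ⟨x, ⟨hx, hxy⟩, hxv⟩
    rw [← hxy, hom_mk]
    exact componentComplMk_eq_of_adj G _ _ hxv

theorem ComponentCompl.hom_injOn :
    Set.InjOn (hom (G := G) (Set.sdiff_subset (s := L) (t := {v})))
      {C | ¬∃ x ∈ C, G.Adj x v} := by
  intro C₁ hC₁ C₂ _ h
  induction C₁ using ComponentCompl.ind with | f hy₁ => ?_
  induction C₂ using ComponentCompl.ind with | f hy₂ => ?_
  obtain ⟨W⟩ := ConnectedComponent.exact h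
  by_contra hne
  refine hC₁ (exists_adj_of_walk_of_notMem _ W (componentComplMk_mem G hy₁) ?_)
  rintro ⟨_, h₂⟩
  exact hne h₂.symm

theorem card_componentCompl_add_one [Finite V] (hv : v ∈ L) :
    Nat.card (G.ComponentCompl L) + 1 = Nat.card (G.ComponentCompl (L \ {v})) +
      Nat.card {C : G.ComponentCompl L // ∃ x ∈ C, G.Adj x v} := by
  set Cv := G.componentComplMk (K := L \ {v}) (v := v) (by simp)
  have hhom : {C : G.ComponentCompl L // ¬∃ x ∈ C, G.Adj x v} ≃ {D // ¬D = Cv} := by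
    refine Equiv.ofBijective (fun C => ⟨C.1.hom Set.sdiff_subset,
      mt (ComponentCompl.hom_eq_componentComplMk_iff hv C.1).mp C.2⟩) ⟨?_, ?_⟩
    · intro C₁ C₂ h
      exact Subtype.ext (ComponentCompl.hom_injOn C₁.2 C₂.2 (congrArg Subtype.val h))
    · rintro ⟨D, hD⟩
      induction D using ComponentCompl.ind with | @f z hz => ?_
      have hzv : z ≠ v := by rintro rfl; exact hD rfl
      have hzL : z ∉ L := fun h => hz ⟨h, hzv⟩
      refine ⟨⟨G.componentComplMk hzL, ?_⟩, rfl⟩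
      rw [← ComponentCompl.hom_eq_componentComplMk_iff hv, ComponentCompl.hom_mk]
      exact hD
  classical
  rw [← Nat.card_congr (Equiv.sumCompl fun C : G.ComponentCompl L => ∃ x ∈ C, G.Adj x v),
    Nat.card_sum, Nat.card_congr hhom, ← Nat.card_congr (Equiv.sumCompl (· = Cv)), Nat.card_sum,
    Nat.card_unique (α := {D // D = Cv})]
  omega

theorem IsAcyclic.mem_support_of_isPath_of_adj_of_adj (hG : G.IsAcyclic) {x y : V}
    (hx : G.Adj v x) (hy : G.Adj v y) (hxy : x ≠ y) {q : G.Walk x y} (hq : q.IsPath) :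
    v ∈ q.support := by
  refine hG.mem_support_of_ne_mem_support_of_adj_of_isPath (q := .cons hx.symm .nil) hq
    (by simp [hx.ne']) hy.symm ?_
  simp [hxy.symm, hy.ne']

theorem IsAcyclic.card_adj_componentCompl (hG : G.IsAcyclic) (hv : v ∈ L) :
    Nat.card {C : G.ComponentCompl L // ∃ x ∈ C, G.Adj x v} =
      Nat.card ↥(G.neighborSet v \ L) := by
  classical
  symm
  refine Nat.card_congr (Equiv.ofBijective (fun x => ⟨G.componentComplMk x.2.2,
    x.1, componentComplMk_mem G x.2.2, (x.2.1 : G.Adj v x).symm⟩) ⟨?_, ?_⟩)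
  · rintro ⟨x, hvx, hxL⟩ ⟨y, hvy, hyL⟩ h
    obtain ⟨W⟩ := ConnectedComponent.exact (congrArg Subtype.val h)
    let q := (W.map (Embedding.induce Lᶜ).toHom).toPath
    by_contra hxy
    have hvq := hG.mem_support_of_isPath_of_adj_of_adj hvx hvy (fun h => hxy (by subst h; rfl)) q.2
    obtain ⟨z, -, hz⟩ :=
      List.mem_map.mp (Walk.support_map _ W ▸ Walk.support_toPath_subset_support _ hvq)
    exact z.2 (by simpa [← hz] using hv)
  · rintro ⟨C, x, ⟨hxL, rfl⟩, hxv⟩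
    exact ⟨⟨x, hxv.symm, hxL⟩, rfl⟩

theorem IsAcyclic.card_componentCompl_erase [Finite V] [DecidableEq V] [G.LocallyFinite]
    (hG : G.IsAcyclic) {S : Finset V} (hv : v ∈ S) :
    Nat.card (G.ComponentCompl ↑(S.erase v)) + (G.neighborFinset v \ S).card =
      Nat.card (G.ComponentCompl ↑S) + 1 := by
  have hcard : Nat.card ↥(G.neighborSet v \ ↑S) = (G.neighborFinset v \ S).card := by
    rw [← Nat.card_eq_finsetCard]
    exact Nat.card_congr (Equiv.subtypeEquivRight (by simp))
  rw [card_componentCompl_add_one (Finset.mem_coe.mpr hv), hG.card_adj_componentCompl hv, hcard,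
    Finset.coe_erase]

end ComponentCompl

section Path

variable {u w : V} {p : G.Walk u w}

theorem Walk.getD_support {k : ℕ} (hk : k ≤ p.length) : p.support.getD k u = p.getVert k := by
  rw [List.getD_eq_getElem _ _ (by simp; omega), Walk.getVert_eq_support_getElem p hk]

theorem IsAcyclic.support_subset_of_isPath (hG : G.IsAcyclic) (hp : p.IsPath) {a b : V}
    (ha : a ∈ p.support) (hb : b ∈ p.support) {q : G.Walk a b} (hq : q.IsPath) :
    q.support ⊆ p.support := by
  obtain ⟨i, rfl, -⟩ := Walk.mem_support_iff_exists_getVert.mp ha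
  obtain ⟨j, rfl, -⟩ := Walk.mem_support_iff_exists_getVert.mp hb
  clear ha hb
  wlog hij : i ≤ j generalizing i j
  · simpa using this j i hq.reverse (by omega)
  have hend : (p.drop i).getVert (j - i) = p.getVert j := by
    rw [Walk.drop_getVert, Nat.add_sub_cancel' hij]
  let r := ((p.drop i).take (j - i)).copy rfl hend
  have hr : r.IsPath := by simpa [r] using (hp.drop i).take (j - i)
  obtain rfl : q = r :=
    congrArg Subtype.val ((hG.subsingleton_path _ _).elim ⟨q, hq⟩ ⟨r, hr⟩)
  rw [Walk.support_copy]
  exact ((Walk.isSubwalk_take _ _).trans (Walk.isSubwalk_drop _ _)).support_subset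

theorem IsAcyclic.eq_succ_of_adj_getVert (hG : G.IsAcyclic) (hp : p.IsPath) {k m : ℕ}
    (hkm : k < m) (hm : m ≤ p.length) (hadj : G.Adj (p.getVert k) (p.getVert m)) :
    m = k + 1 := by
  have hmem : p.getVert m ∈ (p.drop k).support := by
    rw [← Nat.add_sub_cancel' hkm.le, ← Walk.drop_getVert]
    exact Walk.getVert_mem_support _ _
  have hsnd := hG.eq_snd_of_adj_start (hp.drop k) hadj hmem
  rw [Walk.snd, Walk.drop_getVert] at hsnd
  exact hp.getVert_injOn (by simp; omega) (by simp; omega) hsnd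

theorem IsAcyclic.eq_getVert_pred_or_succ_of_adj (hG : G.IsAcyclic) (hp : p.IsPath) {k : ℕ}
    (hk : k ≤ p.length) {x : V} (hx : x ∈ p.support) (hadj : G.Adj (p.getVert k) x) :
    x = p.getVert (k - 1) ∨ x = p.getVert (k + 1) := by
  obtain ⟨m, rfl, hm⟩ := Walk.mem_support_iff_exists_getVert.mp hx
  rcases lt_trichotomy k m with hkm | rfl | hmk
  · exact .inr (by rw [hG.eq_succ_of_adj_getVert hp hkm hm hadj])
  · exact (hadj.ne rfl).elim
  · exact .inl (by rw [hG.eq_succ_of_adj_getVert hp hmk hk hadj.symm]; rfl)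

theorem IsAcyclic.degree_start_le_one (hG : G.IsAcyclic) (hp : p.IsPath)
    [Fintype (G.neighborSet u)]
    (hlongest : ∀ (a b : V) (q : G.Walk a b), q.IsPath → q.length ≤ p.length) :
    G.degree u ≤ 1 := by
  suffices h : ∀ z, G.Adj u z → z = p.snd from Finset.card_le_one.mpr fun x hx y hy =>
    (h x ((mem_neighborFinset _ _ _).mp hx)).trans (h y ((mem_neighborFinset _ _ _).mp hy)).symm
  intro z hz
  by_cases hzp : z ∈ p.support
  · exact hG.eq_snd_of_adj_start hp hz hzp
  · have := hlongest _ _ _ ((Walk.cons_isPath_iff hz.symm p).mpr ⟨hp, hzp⟩)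
    simp at this

theorem IsAcyclic.degree_le_one_of_notMem_support (hG : G.IsAcyclic) (hp : p.IsPath)
    (hcover : ∀ x, x ∈ p.support ∨ ∃ y ∈ p.support, G.Adj x y) {x : V}
    [Fintype (G.neighborSet x)] (hx : x ∉ p.support) : G.degree x ≤ 1 := by
  obtain hx' | ⟨t, ht, hxt⟩ := hcover x
  · exact absurd hx' hx
  suffices h : ∀ z, G.Adj x z → z = t from Finset.card_le_one.mpr fun y hy z hz =>
    (h y ((mem_neighborFinset _ _ _).mp hy)).trans (h z ((mem_neighborFinset _ _ _).mp hz)).symm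
  intro z hxz
  by_contra hzt
  have htx : t ≠ x := fun h => hx (h ▸ ht)
  by_cases hzp : z ∈ p.support
  · have hpath : (Walk.cons hxt.symm (Walk.cons hxz .nil)).IsPath := by
      simp [htx, hxz.ne, Ne.symm hzt]
    exact hx (hG.support_subset_of_isPath hp ht hzp hpath (by simp))
  obtain hz' | ⟨t', ht', hzt'⟩ := hcover z
  · exact hzp hz'
  by_cases htt' : t' = t
  · subst htt'
    classical
    exact hG.cliqueFree le_rfl {x, z, t'} (is3Clique_triple_iff.mpr ⟨hxz, hxt, hzt'⟩)
  · have hxt' : x ≠ t' := fun h => hx (h ▸ ht')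
    have hpath : (Walk.cons hxt.symm (Walk.cons hxz (Walk.cons hzt' .nil))).IsPath := by
      simp [htx, hxz.ne, Ne.symm hzt, Ne.symm htt', hxt', hzt'.ne]
    exact hx (hG.support_subset_of_isPath hp ht ht' hpath (by simp))

theorem IsAcyclic.exists_getVert_eq_of_two_le_degree [G.LocallyFinite] (hG : G.IsAcyclic)
    (hp : p.IsPath) (hcover : ∀ x, x ∈ p.support ∨ ∃ y ∈ p.support, G.Adj x y)
    (hlongest : ∀ (a b : V) (q : G.Walk a b), q.IsPath → q.length ≤ p.length)
    {v : V} (hv : 2 ≤ G.degree v) : ∃ k, 0 < k ∧ k < p.length ∧ p.getVert k = v := by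
  have hvp : v ∈ p.support := by
    by_contra h
    have := hG.degree_le_one_of_notMem_support hp hcover h
    omega
  obtain ⟨k, rfl, hk⟩ := Walk.mem_support_iff_exists_getVert.mp hvp
  refine ⟨k, Nat.pos_of_ne_zero ?_, lt_of_le_of_ne hk ?_, rfl⟩
  · rintro rfl
    have := hG.degree_start_le_one hp hlongest
    rw [Walk.getVert_zero] at hv
    omega
  · rintro rfl
    have := hG.degree_start_le_one hp.reverse (by simpa using hlongest)
    rw [Walk.getVert_length] at hv
    omega

theorem IsAcyclic.two_le_card_neighborFinset_sdiff_iff [G.LocallyFinite] [DecidableEq V]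
    (hG : G.IsAcyclic) (hp : p.IsPath) {S : Finset V} (hS : ∀ x ∈ S, x ∈ p.support) {k : ℕ}
    (hk₀ : 0 < k) (hk : k < p.length) :
    2 ≤ (G.neighborFinset (p.getVert k) \ S).card ↔
      (G.degree (p.getVert k) = 2 → p.getVert (k - 1) ∉ S ∧ p.getVert (k + 1) ∉ S) ∧
      (G.degree (p.getVert k) = 3 → p.getVert (k - 1) ∉ S ∨ p.getVert (k + 1) ∉ S) := by
  rw [← card_neighborFinset_eq_degree]
  refine Finset.two_le_card_sdiff_iff ?_ ?_ ?_ ?_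
  · intro h
    have := hp.getVert_injOn (by simp; omega) (by simp; omega) h
    omega
  · have := p.adj_getVert_succ (i := k - 1) (by omega)
    rw [Nat.sub_add_cancel hk₀] at this
    exact (mem_neighborFinset _ _ _).mpr this.symm
  · exact (mem_neighborFinset _ _ _).mpr (p.adj_getVert_succ hk)
  · exact fun x hx hxS => hG.eq_getVert_pred_or_succ_of_adj hp hk.le (hS x hxS)
      ((mem_neighborFinset _ _ _).mp hx)

theorem IsAcyclic.forall_two_le_card_neighborFinset_sdiff_iff [G.LocallyFinite] [DecidableEq V]
    (hG : G.IsAcyclic) (hp : p.IsPath)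
    (hcover : ∀ x, x ∈ p.support ∨ ∃ y ∈ p.support, G.Adj x y)
    (hlongest : ∀ (a b : V) (q : G.Walk a b), q.IsPath → q.length ≤ p.length) (S : Finset V) :
    (∀ v ∈ S, 2 ≤ (G.neighborFinset v \ S).card) ↔
      ∀ v ∈ S, ∃ k, 0 < k ∧ k < p.length ∧ p.getVert k = v ∧
        (G.degree v = 2 → p.getVert (k - 1) ∉ S ∧ p.getVert (k + 1) ∉ S) ∧
        (G.degree v = 3 → p.getVert (k - 1) ∉ S ∨ p.getVert (k + 1) ∉ S) := by
  constructor
  · intro h v hv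
    have hint : ∀ x ∈ S, ∃ k, 0 < k ∧ k < p.length ∧ p.getVert k = x := fun x hx =>
      hG.exists_getVert_eq_of_two_le_degree hp hcover hlongest
        ((h x hx).trans (Finset.card_le_card Finset.sdiff_subset))
    obtain ⟨k, hk₀, hk, rfl⟩ := hint v hv
    refine ⟨k, hk₀, hk, rfl,
      (hG.two_le_card_neighborFinset_sdiff_iff hp ?_ hk₀ hk).mp (h _ hv)⟩
    intro x hx
    obtain ⟨m, -, -, rfl⟩ := hint x hx
    exact p.getVert_mem_support m
  · intro h v hv
    obtain ⟨k, hk₀, hk, rfl, hcond⟩ := h v hv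
    refine (hG.two_le_card_neighborFinset_sdiff_iff hp ?_ hk₀ hk).mpr hcond
    intro x hx
    obtain ⟨m, -, -, rfl, -⟩ := h x hx
    exact p.getVert_mem_support m

end Path

end SimpleGraph

open SimpleGraph

theorem caterpillar_minimal_prime_characterization_general {V : Type*} [Fintype V] [DecidableEq V]
    (T : SimpleGraph V) [DecidableRel T.Adj] (hT : T.IsTree)
    (u w : V) (p : T.Walk u w) (hp : p.IsPath)
    (hcover : ∀ x : V, x ∈ p.support ∨ ∃ y ∈ p.support, T.Adj x y)
    {ℓ : ℕ} (hplen : p.support.length = ℓ)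
    (hlongest : ∀ (a b : V) (q : T.Walk a b), q.IsPath → q.support.length ≤ ℓ)
    (S : Finset V)
    (c : Finset V → ℕ)
    (hc : ∀ A : Finset V,
      c A = Nat.card ((T.induce ((↑A : Set V)ᶜ)).ConnectedComponent)) :
    (∀ v ∈ S, c (S.erase v) < c S) ↔
      ∀ v ∈ S, ∃ k : ℕ, 0 < k ∧ k + 1 < p.support.length ∧
        p.support.getD k u = v ∧
        (T.degree v = 2 →
          p.support.getD (k - 1) u ∉ S ∧ p.support.getD (k + 1) u ∉ S) ∧
        (T.degree v = 3 →
          p.support.getD (k - 1) u ∉ S ∨ p.support.getD (k + 1) u ∉ S) := by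
  have hG := hT.isAcyclic
  have hlongest' : ∀ (a b : V) (q : T.Walk a b), q.IsPath → q.length ≤ p.length :=
    fun a b q hq => by simpa [Walk.length_support, ← hplen] using hlongest a b q hq
  have hcount : ∀ v ∈ S, c (S.erase v) < c S ↔ 2 ≤ (T.neighborFinset v \ S).card := by
    intro v hv
    have := hG.card_componentCompl_erase hv
    unfold ComponentCompl at this
    rw [hc, hc]
    omega
  rw [forall₂_congr hcount, hG.forall_two_le_card_neighborFinset_sdiff_iff hp hcover hlongest']
  refine forall₂_congr fun v _ => exists_congr fun k => ?_
  rw [Walk.length_support, Nat.add_lt_add_iff_right]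
  refine and_congr_right fun _ => and_congr_right fun hk => ?_
  rw [Walk.getD_support hk.le, Walk.getD_support (by omega), Walk.getD_support (by omega)]

/-- Characterization of when `c(S \ {v}) < c(S)` for all `v ∈ S` (equivalently,
when `P_S(T)` is a minimal prime of the binomial edge ideal), for a nonempty
set `S` of vertices of a caterpillar tree `T` with central path
`p : v_1, …, v_ℓ` (`ℓ ≥ 3`), the central path being a longest (induced) path.
Here `c A` is the number of connected components of the induced subgraph on
the complement of `A`. -/
theorem caterpillar_minimal_prime_characterization {V : Type*} [Fintype V] [DecidableEq V]
    (T : SimpleGraph V) [DecidableRel T.Adj] (hT : T.IsTree)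
    (u w : V) (p : T.Walk u w) (hp : p.IsPath)
    (hcover : ∀ x : V, x ∈ p.support ∨ ∃ y ∈ p.support, T.Adj x y)
    {ℓ : ℕ} (hplen : p.support.length = ℓ) (hℓ : 3 ≤ ℓ)
    (hlongest : ∀ (a b : V) (q : T.Walk a b), q.IsPath → q.support.length ≤ ℓ)
    (S : Finset V) (hS : S.Nonempty)
    (c : Finset V → ℕ)
    (hc : ∀ A : Finset V,
      c A = Nat.card ((T.induce ((↑A : Set V)ᶜ)).ConnectedComponent)) :
    (∀ v ∈ S, c (S.erase v) < c S) ↔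
      ∀ v ∈ S, ∃ k : ℕ, 0 < k ∧ k + 1 < p.support.length ∧
        p.support.getD k u = v ∧
        (T.degree v = 2 →
          p.support.getD (k - 1) u ∉ S ∧ p.support.getD (k + 1) u ∉ S) ∧
        (T.degree v = 3 →
          p.support.getD (k - 1) u ∉ S ∨ p.support.getD (k + 1) u ∉ S) :=
  caterpillar_minimal_prime_characterization_general T hT u w p hp hcover hplen hlongest S c hc
end
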